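/- Let G be the barbell graph B_n consisting of two cliques each on (n−1)/2 vertices joined by a path of length 2 (for odd n ≥ 5). Then the conductance of B_n satisfies φ(B_n) = Θ(1/n²); in particular, the cut separating one clique from the rest has exactly one crossing edge and volume Θ(n²), so φ(B_n) ≤ c/n² for some constant c, and every cut has conductance at least c'/n² for some constant c' > 0. -/

import Mathlib

open Finset

/-- Vertex type of the barbell graph: two cliques of `k` vertices and a middle vertex. -/
abbrev BV (k : ℕ) := Fin k ⊕ Fin k ⊕ Unit

/-- Underlying relation of the barbell graph `B_n` (with `k = (n-1)/2`): two
`k`-cliques, and a middle vertex joined to one designated vertex (`0`) in each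
clique, forming a path of length `2` between the cliques. -/
def barbellRel (k : ℕ) [NeZero k] : BV k → BV k → Prop
  | .inl _, .inl _ => True
  | .inr (.inl _), .inr (.inl _) => True
  | .inr (.inr _), .inl a => a = 0
  | .inr (.inr _), .inr (.inl a) => a = 0
  | _, _ => False

/-- The barbell graph. -/
def barbell (k : ℕ) [NeZero k] : SimpleGraph (BV k) :=
  SimpleGraph.fromRel (barbellRel k)

/-- The left clique as a vertex set. -/
def leftClique (k : ℕ) : Finset (BV k) :=
  Finset.univ.image (Sum.inl : Fin k → BV k)

/-- Number of edges crossing the cut `(S, Sᶜ)`. -/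
def cutEdges {V : Type*} [Fintype V] [DecidableEq V] (G : SimpleGraph V) [DecidableRel G.Adj]
    (S : Finset V) : ℕ :=
  (Finset.univ.filter (fun p : V × V => p.1 ∈ S ∧ p.2 ∉ S ∧ G.Adj p.1 p.2)).card

/-- Volume of a vertex set: sum of degrees. -/
def vol {V : Type*} [Fintype V] (G : SimpleGraph V) [DecidableRel G.Adj]
    (S : Finset V) : ℕ :=
  ∑ v ∈ S, G.degree v

/-- Conductance of a cut `(S, Sᶜ)`. -/
noncomputable def cutCond {V : Type*} [Fintype V] [DecidableEq V] (G : SimpleGraph V)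
    [DecidableRel G.Adj] (S : Finset V) : ℝ :=
  (cutEdges G S : ℝ) /
    min (vol G S : ℝ) (2 * (G.edgeFinset.card : ℝ) - (vol G S : ℝ))

/-- The conductance of the graph. -/
noncomputable def graphCond {V : Type*} [Fintype V] [DecidableEq V] (G : SimpleGraph V)
    [DecidableRel G.Adj] : ℝ :=
  sInf {x : ℝ | ∃ S : Finset V, S.Nonempty ∧ S ≠ Finset.univ ∧ x = cutCond G S}

/-! The cut around a clique is crossed only by the edge to the middle vertex and has
volume `k(k-1)+1`, so `φ(B_n) ≤ 9/n²`. Conversely, `B_n` is connected, so every proper cut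
is crossed by an edge and both of its sides have positive volume; since the two volumes add
up to `2|E|`, the smaller one is at most `|E| = k(k-1)+2 ≤ n²`, so every cut has
conductance at least `1/n²`. -/

section Conductance

variable {V : Type*} [Fintype V] (G : SimpleGraph V) [DecidableRel G.Adj]

lemma one_le_vol_of_adj {S : Finset V} {u v : V} (hu : u ∈ S) (huv : G.Adj u v) :
    1 ≤ vol G S :=
  ((G.degree_pos_iff_exists_adj u).mpr ⟨v, huv⟩).trans_le
    (single_le_sum (f := fun w ↦ G.degree w) (fun _ _ ↦ Nat.zero_le _) hu)

variable [DecidableEq V]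

lemma vol_add_vol_compl (S : Finset V) : vol G S + vol G Sᶜ = 2 * #G.edgeFinset := by
  rw [vol, vol, sum_add_sum_compl, G.sum_degrees_eq_twice_card_edges]

lemma cutCond_nonneg (S : Finset V) : 0 ≤ cutCond G S := by
  have hvol := vol_add_vol_compl G S
  refine div_nonneg (Nat.cast_nonneg _) (le_min (Nat.cast_nonneg _) ?_)
  rw [sub_nonneg]
  exact_mod_cast (Nat.le_add_right _ _).trans_eq hvol

lemma graphCond_le_cutCond {S : Finset V} (hS : S.Nonempty) (hS' : S ≠ univ) :
    graphCond G ≤ cutCond G S :=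
  csInf_le ⟨0, by rintro _ ⟨T, -, -, rfl⟩; exact cutCond_nonneg G T⟩ ⟨S, hS, hS', rfl⟩

lemma cutEdges_pos_of_connected (hG : G.Connected) {S : Finset V} (hS : S.Nonempty)
    (hS' : S ≠ univ) : 0 < cutEdges G S := by
  obtain ⟨u, hu⟩ := hS
  obtain ⟨v, hv⟩ : ∃ v, v ∉ S := by
    by_contra! h
    exact hS' (eq_univ_of_forall h)
  obtain ⟨d, -, hd₁, hd₂⟩ := (hG u v).some.exists_boundary_dart (S : Set V) hu hv
  exact card_pos.mpr ⟨(d.fst, d.snd), mem_filter.mpr ⟨mem_univ _, hd₁, hd₂, d.adj⟩⟩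

lemma inv_card_edgeFinset_le_cutCond {S : Finset V} (hS : 0 < cutEdges G S) :
    1 / (#G.edgeFinset : ℝ) ≤ cutCond G S := by
  obtain ⟨⟨u, v⟩, huv⟩ := card_pos.mp hS
  simp only [mem_filter, mem_univ, true_and] at huv
  obtain ⟨hu, hv, hadj⟩ := huv
  have hS₁ : (1 : ℝ) ≤ vol G S := by exact_mod_cast one_le_vol_of_adj G hu hadj
  have hS₂ : (1 : ℝ) ≤ vol G Sᶜ := by
    exact_mod_cast one_le_vol_of_adj G (mem_compl.mpr hv) hadj.symm
  have hvol : (vol G S : ℝ) + vol G Sᶜ = 2 * #G.edgeFinset := by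
    exact_mod_cast vol_add_vol_compl G S
  have hmin_pos : 0 < min (vol G S : ℝ) (2 * #G.edgeFinset - vol G S) :=
    lt_min (by linarith) (by linarith)
  have hmin_le : min (vol G S : ℝ) (2 * #G.edgeFinset - vol G S) ≤ #G.edgeFinset := by
    linarith [min_le_left (vol G S : ℝ) (2 * #G.edgeFinset - vol G S),
      min_le_right (vol G S : ℝ) (2 * #G.edgeFinset - vol G S)]
  exact div_le_div₀ (Nat.cast_nonneg _) (by exact_mod_cast hS) hmin_pos hmin_le

end Conductance

section Barbell

open SimpleGraph

variable {k : ℕ} [NeZero k]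

lemma barbell_adj {v w : BV k} :
    (barbell k).Adj v w ↔ v ≠ w ∧ (barbellRel k v w ∨ barbellRel k w v) :=
  fromRel_adj _ _ _

lemma barbell_adj_inl_inl {a b : Fin k} :
    (barbell k).Adj (.inl a) (.inl b) ↔ a ≠ b := by
  simp [barbell_adj, barbellRel]

lemma barbell_adj_inr_inr {a b : Fin k} :
    (barbell k).Adj (.inr (.inl a)) (.inr (.inl b)) ↔ a ≠ b := by
  simp [barbell_adj, barbellRel]

lemma barbell_adj_mid_inl {a : Fin k} :
    (barbell k).Adj (.inr (.inr ())) (.inl a) ↔ a = 0 := by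
  simp [barbell_adj, barbellRel]

lemma barbell_adj_mid_inr {a : Fin k} :
    (barbell k).Adj (.inr (.inr ())) (.inr (.inl a)) ↔ a = 0 := by
  simp [barbell_adj, barbellRel]

lemma barbell_connected : (barbell k).Connected := by
  have reach_clique (f : Fin k → BV k) (hf : ∀ a b, a ≠ b → (barbell k).Adj (f a) (f b))
      (h0 : (barbell k).Adj (.inr (.inr ())) (f 0)) (a : Fin k) :
      (barbell k).Reachable (.inr (.inr ())) (f a) := by
    refine h0.reachable.trans ?_
    rcases eq_or_ne 0 a with rfl | ha
    · rfl
    · exact (hf 0 a ha).reachable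
  refine (connected_iff_exists_forall_reachable _).mpr ⟨.inr (.inr ()), ?_⟩
  rintro (a | a | ⟨⟩)
  · exact reach_clique Sum.inl (fun _ _ ↦ barbell_adj_inl_inl.mpr)
      (barbell_adj_mid_inl.mpr rfl) a
  · exact reach_clique (Sum.inr ∘ Sum.inl) (fun _ _ ↦ barbell_adj_inr_inr.mpr)
      (barbell_adj_mid_inr.mpr rfl) a
  · rfl

lemma leftClique_nonempty : (leftClique k).Nonempty :=
  ⟨.inl 0, mem_image_of_mem _ (mem_univ _)⟩

lemma leftClique_ne_univ : leftClique k ≠ univ := by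
  intro h
  have hmid := mem_univ (.inr (.inr ()) : BV k)
  rw [← h] at hmid
  simp [leftClique] at hmid

lemma sum_barbell_degree_clique :
    ∑ a : Fin k, ((k - 1) + if a = 0 then 1 else 0) = k * (k - 1) + 1 := by
  simp [sum_add_distrib]

variable [DecidableRel (barbell k).Adj]

lemma barbell_degree_inl (a : Fin k) :
    (barbell k).degree (.inl a) = (k - 1) + if a = 0 then 1 else 0 := by
  have : (barbell k).neighborFinset (.inl a) =
      (univ.erase a).map .inl ∪ if a = 0 then {.inr (.inr ())} else ∅ := by
    ext v
    rcases v with b | b | ⟨⟩ <;> by_cases h : a = 0 <;>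
      simp [h, mem_neighborFinset, barbell_adj, barbellRel, ne_comm]
  rw [← card_neighborFinset_eq_degree, this, card_union_of_disjoint] <;>
    by_cases h : a = 0 <;> simp [h, Finset.disjoint_left]

lemma barbell_degree_inr (a : Fin k) :
    (barbell k).degree (.inr (.inl a)) = (k - 1) + if a = 0 then 1 else 0 := by
  have : (barbell k).neighborFinset (.inr (.inl a)) =
      ((univ.erase a).map .inl).map .inr ∪ if a = 0 then {.inr (.inr ())} else ∅ := by
    ext v
    rcases v with b | b | ⟨⟩ <;> by_cases h : a = 0 <;>
      simp [h, mem_neighborFinset, barbell_adj, barbellRel, ne_comm]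
  rw [← card_neighborFinset_eq_degree, this, card_union_of_disjoint] <;>
    by_cases h : a = 0 <;> simp [h, Finset.disjoint_left]

lemma barbell_degree_mid : (barbell k).degree (.inr (.inr ())) = 2 := by
  have : (barbell k).neighborFinset (.inr (.inr ())) = {.inl 0, .inr (.inl 0)} := by
    ext v
    rcases v with b | b | ⟨⟩ <;> simp [mem_neighborFinset, barbell_adj, barbellRel, eq_comm]
  simp [← card_neighborFinset_eq_degree, this]

lemma vol_barbell_leftClique : vol (barbell k) (leftClique k) = k * (k - 1) + 1 := by
  rw [vol, leftClique, sum_image fun _ _ _ _ h ↦ Sum.inl_injective h]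
  simp only [barbell_degree_inl, sum_barbell_degree_clique]

lemma card_edgeFinset_barbell : #(barbell k).edgeFinset = k * (k - 1) + 2 := by
  have h := sum_degrees_eq_twice_card_edges (barbell k)
  simp only [Fintype.sum_sum_type, barbell_degree_inl, barbell_degree_inr,
    sum_barbell_degree_clique, Fintype.sum_unique] at h
  rw [barbell_degree_mid] at h
  omega

lemma cutEdges_barbell_leftClique : cutEdges (barbell k) (leftClique k) = 1 := by
  rw [cutEdges, card_eq_one]
  refine ⟨(.inl 0, .inr (.inr ())), ?_⟩
  ext ⟨p, q⟩
  rw [Finset.mem_filter]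
  rcases p with a | a | ⟨⟩ <;> rcases q with b | b | ⟨⟩ <;>
    simp [leftClique, barbell_adj, barbellRel, eq_comm]

lemma cutCond_barbell_leftClique :
    cutCond (barbell k) (leftClique k) = 1 / ((k * (k - 1) + 1 : ℕ) : ℝ) := by
  rw [cutCond, cutEdges_barbell_leftClique, vol_barbell_leftClique, card_edgeFinset_barbell,
    min_eq_left]
  · norm_num
  · push_cast
    linarith

end Barbell

/-- The barbell graph `B_n` (odd `n ≥ 5`, two cliques of size `k = (n-1)/2`
joined by a path of length `2`) has conductance `Θ(1/n²)`: the cut separating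
one clique from the rest has exactly one crossing edge and volume
`k(k-1) + 1 = Θ(n²)`, so `φ(B_n) ≤ c/n²`, and every cut has conductance at
least `c'/n²`. -/
theorem barbell_conductance :
    ∃ c c' : ℝ, 0 < c ∧ 0 < c' ∧
      ∀ (n k : ℕ) [NeZero k], Odd n → 5 ≤ n → k = (n - 1) / 2 →
        @cutEdges (BV k) _ _ (barbell k) (Classical.decRel _) (leftClique k) = 1 ∧
        @vol (BV k) _ (barbell k) (Classical.decRel _) (leftClique k) = k * (k - 1) + 1 ∧
        @graphCond (BV k) _ _ (barbell k) (Classical.decRel _) ≤ c / (n : ℝ) ^ 2 ∧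
        ∀ S : Finset (BV k), S.Nonempty → S ≠ Finset.univ →
          c' / (n : ℝ) ^ 2 ≤ @cutCond (BV k) _ _ (barbell k) (Classical.decRel _) S := by
  refine ⟨9, 1, by norm_num, by norm_num, fun n k _ hodd hn hk ↦ ?_⟩
  let _ : DecidableRel (barbell k).Adj := Classical.decRel _
  obtain ⟨j, rfl, rfl⟩ : ∃ j, n = 2 * j + 5 ∧ k = j + 2 := by
    obtain ⟨i, rfl⟩ := hodd
    exact ⟨i - 2, by omega, by omega⟩
  have hn_pos : (0 : ℝ) < ((2 * j + 5 : ℕ) : ℝ) ^ 2 := by positivity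
  refine ⟨cutEdges_barbell_leftClique, vol_barbell_leftClique, ?_, fun S hS hS' ↦ ?_⟩
  · calc graphCond (barbell (j + 2))
        ≤ cutCond (barbell (j + 2)) (leftClique (j + 2)) :=
          graphCond_le_cutCond _ leftClique_nonempty leftClique_ne_univ
      _ = 1 / (((j + 2) * (j + 2 - 1) + 1 : ℕ) : ℝ) := cutCond_barbell_leftClique
      _ ≤ 9 / ((2 * j + 5 : ℕ) : ℝ) ^ 2 := by
          rw [div_le_div_iff₀ (by positivity) hn_pos]
          push_cast [Nat.add_sub_cancel]
          nlinarith
  · calc 1 / ((2 * j + 5 : ℕ) : ℝ) ^ 2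
        ≤ 1 / (#(barbell (j + 2)).edgeFinset : ℝ) := by
          rw [card_edgeFinset_barbell]
          gcongr
          push_cast [Nat.add_sub_cancel]
          nlinarith
      _ ≤ cutCond (barbell (j + 2)) S :=
          inv_card_edgeFinset_le_cutCond _
            (cutEdges_pos_of_connected _ barbell_connected hS hS')
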